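/- Let λ ∈ [0,1], ε ∈ [0, π/4], c = cos ε, and θ = π/2 - ε/2. Then h(λ sin²θ + (1-λ)cos²θ) + h(λ sin²(θ+ε) + (1-λ)cos²(θ+ε)) = ln 4 + η(1 + c - 2λc) + η(1 - c + 2λc), where η(x) = -x ln x. (Subtracting 2h(λ) from both sides gives the uncertainty bound of Eq. (eq:eta): ln 4 + η(1+c-2λc) + η(1-c+2λc) - 2h(λ).) -/

import Mathlib

open Real

/-- `η(x) = -x ln x` (natural logarithm). -/
noncomputable def eta (x : ℝ) : ℝ := -(x * Real.log x)

/-- Binary entropy `h(x) = η(x) + η(1-x)`. -/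
noncomputable def binEnt (x : ℝ) : ℝ := eta x + eta (1 - x)

/-!
The angles `θ` and `θ + ε` are symmetric about `π/2`, so both measurements see the same
distribution `p = (1 - c + 2λc)/2`, `1 - p = (1 + c - 2λc)/2`. Halving the arguments of `η`
costs exactly `ln 2` per binary entropy, since the two arguments sum to `2`.
-/

lemma eta_div_two (x : ℝ) : eta (x / 2) = eta x / 2 + x / 2 * Real.log 2 := by
  rcases eq_or_ne x 0 with rfl | hx
  · simp [eta]
  · rw [eta, eta, Real.log_div hx two_ne_zero]
    ring

lemma two_mul_binEnt_div_two (y : ℝ) :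
    2 * binEnt (y / 2) = Real.log 4 + eta (2 - y) + eta y := by
  have hlog4 : Real.log 4 = 2 * Real.log 2 := by
    rw [show (4 : ℝ) = 2 ^ 2 by norm_num, Real.log_pow, Nat.cast_ofNat]
  rw [binEnt, show 1 - y / 2 = (2 - y) / 2 by ring, eta_div_two, eta_div_two, hlog4]
  ring

theorem shannon_value_at_critical_point_general
    (lam : ℝ)
    (ε : ℝ)
    (c : ℝ) (hc : c = Real.cos ε)
    (θ : ℝ) (hθ : θ = π/2 - ε/2) :
    binEnt (lam * Real.sin θ ^ 2 + (1 - lam) * Real.cos θ ^ 2)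
      + binEnt (lam * Real.sin (θ + ε) ^ 2 + (1 - lam) * Real.cos (θ + ε) ^ 2)
      = Real.log 4 + eta (1 + c - 2*lam*c) + eta (1 - c + 2*lam*c) := by
  have hreflect : θ + ε = π - θ := by rw [hθ]; ring
  have hsin : Real.sin θ ^ 2 = (1 + c) / 2 := by
    rw [hθ, Real.sin_pi_div_two_sub, Real.cos_sq, show 2 * (ε / 2) = ε by ring, hc]
    ring
  have hcos : Real.cos θ ^ 2 = (1 - c) / 2 := by
    rw [hθ, Real.cos_pi_div_two_sub, Real.sin_sq_eq_half_sub, show 2 * (ε / 2) = ε by ring, hc]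
    ring
  rw [hreflect, Real.sin_pi_sub, Real.cos_pi_sub, neg_sq, ← two_mul, hsin, hcos]
  rw [show lam * ((1 + c) / 2) + (1 - lam) * ((1 - c) / 2) = (1 - c + 2 * lam * c) / 2 by ring,
    two_mul_binEnt_div_two, show 2 - (1 - c + 2 * lam * c) = 1 + c - 2 * lam * c by ring]

theorem shannon_value_at_critical_point
    (lam : ℝ) (hlam : lam ∈ Set.Icc (0:ℝ) 1)
    (ε : ℝ) (hε : ε ∈ Set.Icc (0:ℝ) (π/4))
    (c : ℝ) (hc : c = Real.cos ε)
    (θ : ℝ) (hθ : θ = π/2 - ε/2) :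
    binEnt (lam * Real.sin θ ^ 2 + (1 - lam) * Real.cos θ ^ 2)
      + binEnt (lam * Real.sin (θ + ε) ^ 2 + (1 - lam) * Real.cos (θ + ε) ^ 2)
      = Real.log 4 + eta (1 + c - 2*lam*c) + eta (1 - c + 2*lam*c) :=
  shannon_value_at_critical_point_general lam ε c hc θ hθ
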